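/- arXiv:2305.07449 — 2 statements merged into one kernel-verified Lean document; each statement's English description precedes it below -/
import Mathlib

section
/- Let P be a polygon whose boundary ∂P is covered by S(P) lines, and let k < S(P). If p and q are bivariate polynomials of degree at most k with p = q on ∂P, then p = q on all of ℝ². Consequently the serendipity projector condition ∫_{∂P}(v − Π v) q_k ds = 0 for all q_k ∈ P_k uniquely determines Π v ∈ P_k. -/
/-!
Let `r = p - q`. On each edge `[V i, V (i+1)]` the restriction of `r` to the edge's line is a
univariate polynomial with infinitely many roots, so `r` vanishes on every edge line. These lines
cover `∂P`, so there are at least `S(P) > k` distinct ones. A polynomial of degree `≤ k` vanishing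
on `k + 1` distinct hyperplanes vanishes identically: through a point `z` off all of them choose a
line meeting them at `k + 1` distinct points; the restriction of `r` to it has degree `≤ k` and
`k + 1` roots, hence is zero, in particular at `z`.
-/

/-- A line in the plane: the zero set of a nonzero affine function. -/
def IsLine (L : Set (ℝ × ℝ)) : Prop :=
  ∃ a b c : ℝ, (a, b) ≠ (0, 0) ∧ L = {x : ℝ × ℝ | a * x.1 + b * x.2 + c = 0}

section Hyperplanes

variable {K V : Type*} [Field K] [AddCommGroup V] [Module K V]

theorem AffineMap.apply_add_smul (f : V →ᵃ[K] K) (z w : V) (t : K) :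
    f (z + t • w) = f z + t * f.linear w := by
  rw [add_comm z, ← vadd_eq_add, f.map_vadd, map_smul, vadd_eq_add, smul_eq_mul, add_comm]

theorem AffineMap.mul_apply_eq_of_smul_linear_eq (f g : V →ᵃ[K] K) {z : V}
    (h : f z • g.linear = g z • f.linear) (x : V) : f z * g x = g z * f x := by
  have hlin := LinearMap.congr_fun h (x - z)
  have hf := f.linearMap_vsub x z
  have hg := g.linearMap_vsub x z
  simp only [LinearMap.smul_apply, smul_eq_mul, vsub_eq_sub] at hlin hf hg
  linear_combination hlin - f z * hg + g z * hf

/-- A direction `w` along which the line through `z` meets each hyperplane `f i = 0` exactly once,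
at pairwise distinct parameters `-f i z / (f i).linear w`. -/
theorem AffineMap.exists_direction_separating [Infinite K] {ι : Type*} [Finite ι]
    (f : ι → V →ᵃ[K] K) (hf : ∀ i, (f i).linear ≠ 0)
    (hdistinct : Function.Injective fun i => {x | f i x = 0}) {z : V} (hz : ∀ i, f i z ≠ 0) :
    ∃ w, (∀ i, (f i).linear w ≠ 0) ∧
      ∀ i j, i ≠ j → f i z * (f j).linear w ≠ f j z * (f i).linear w := by
  let cross (ij : {ij : ι × ι // ij.1 ≠ ij.2}) : Module.Dual K V :=
    f ij.1.1 z • (f ij.1.2).linear - f ij.1.2 z • (f ij.1.1).linear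
  have hcross : ∀ ij, cross ij ≠ 0 := by
    rintro ⟨⟨i, j⟩, hij⟩ h
    have key := AffineMap.mul_apply_eq_of_smul_linear_eq (f i) (f j) (sub_eq_zero.mp h)
    refine hij (hdistinct (Set.ext fun x => ?_))
    change f i x = 0 ↔ f j x = 0
    constructor <;> intro hx <;> simpa [hx, hz] using key x
  have hne : ∀ k, Sum.elim (fun i => (f i).linear) cross k ≠ 0 := Sum.forall.mpr ⟨hf, hcross⟩
  obtain ⟨w, hw⟩ := Module.Dual.exists_forall_ne_zero_of_forall_exists _
    fun k => by simpa using DFunLike.ne_iff.mp (hne k)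
  refine ⟨w, fun i => hw (.inl i), fun i j hij h => hw (.inr ⟨(i, j), hij⟩) ?_⟩
  simp [cross, h]

end Hyperplanes

open Polynomial

namespace MvPolynomial

variable {σ K : Type*} [Field K]

noncomputable def restrictLine (r : MvPolynomial σ K) (z w : σ → K) : K[X] :=
  aeval (fun i => Polynomial.C (w i) * Polynomial.X + Polynomial.C (z i)) r

theorem eval_restrictLine (r : MvPolynomial σ K) (z w : σ → K) (t : K) :
    (r.restrictLine z w).eval t = eval (z + t • w) r := by
  rw [restrictLine, ← Polynomial.coe_aeval_eq_eval, comp_aeval_apply, ← aeval_eq_eval]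
  congr with i
  simp only [Polynomial.coe_aeval_eq_eval, Polynomial.eval_add, Polynomial.eval_mul,
    Polynomial.eval_C, Polynomial.eval_X, Pi.add_apply, Pi.smul_apply, smul_eq_mul]
  ring

theorem natDegree_aeval_le_totalDegree {g : σ → K[X]} (hg : ∀ i, (g i).natDegree ≤ 1)
    (r : MvPolynomial σ K) : (aeval g r).natDegree ≤ r.totalDegree := by
  rw [aeval_def, eval₂_eq]
  refine natDegree_sum_le_of_forall_le _ _ fun d hd => ?_
  calc (algebraMap K K[X] (r.coeff d) * ∏ i ∈ d.support, g i ^ d i).natDegree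
      ≤ ∑ i ∈ d.support, (g i ^ d i).natDegree :=
        natDegree_C_mul_le _ _ |>.trans (natDegree_prod_le _ _)
    _ ≤ ∑ i ∈ d.support, d i :=
        Finset.sum_le_sum fun i _ => natDegree_pow_le_of_le _ (hg i) |>.trans_eq (mul_one _)
    _ ≤ r.totalDegree := le_totalDegree hd

theorem natDegree_restrictLine_le (r : MvPolynomial σ K) (z w : σ → K) :
    (r.restrictLine z w).natDegree ≤ r.totalDegree :=
  natDegree_aeval_le_totalDegree (fun _ => natDegree_linear_le) r

theorem eval_add_smul_eq_zero_of_infinite [Infinite K] {r : MvPolynomial σ K} {z w : σ → K}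
    {T : Set K} (hT : T.Infinite) (hr : ∀ t ∈ T, eval (z + t • w) r = 0) (t : K) :
    eval (z + t • w) r = 0 := by
  have hline : r.restrictLine z w = 0 :=
    eq_zero_of_infinite_isRoot _ (hT.mono fun t ht => (eval_restrictLine r z w t).trans (hr t ht))
  rw [← eval_restrictLine, hline, Polynomial.eval_zero]

theorem eq_zero_of_eval_eq_zero_on_hyperplanes [Infinite K] {ι : Type*} [Fintype ι]
    {r : MvPolynomial σ K} (f : ι → (σ → K) →ᵃ[K] K) (hf : ∀ i, (f i).linear ≠ 0)
    (hdistinct : Function.Injective fun i => {x | f i x = 0})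
    (hdeg : r.totalDegree < Fintype.card ι) (hvan : ∀ i x, f i x = 0 → eval x r = 0) :
    r = 0 := by
  refine funext fun z => ?_
  rw [map_zero]
  by_contra hrz
  have hz : ∀ i, f i z ≠ 0 := fun i hi => hrz (hvan i z hi)
  obtain ⟨w, hw, hsep⟩ := AffineMap.exists_direction_separating f hf hdistinct hz
  let t (i : ι) : K := -f i z / (f i).linear w
  have ht : Function.Injective t := by
    intro i j hij
    by_contra hne
    rw [div_eq_div_iff (hw i) (hw j)] at hij
    exact hsep i j hne (by linear_combination -hij)
  have hroot : ∀ i, (r.restrictLine z w).eval (t i) = 0 := by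
    intro i
    rw [eval_restrictLine]
    refine hvan i _ ?_
    rw [AffineMap.apply_add_smul, div_mul_cancel₀ _ (hw i), add_neg_cancel]
  have hline : r.restrictLine z w = 0 := eq_zero_of_natDegree_lt_card_of_eval_eq_zero _ ht hroot
    ((natDegree_restrictLine_le r z w).trans_lt hdeg)
  have := eval_restrictLine r z w 0
  rw [hline, Polynomial.eval_zero, zero_smul, add_zero] at this
  exact hrz this.symm

end MvPolynomial

section Plane

open MvPolynomial

theorem IsLine.exists_affineMap {L : Set (ℝ × ℝ)} (hL : IsLine L) :
    ∃ f : (Fin 2 → ℝ) →ᵃ[ℝ] ℝ, f.linear ≠ 0 ∧ ∀ x, x ∈ L ↔ f ![x.1, x.2] = 0 := by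
  obtain ⟨a, b, c, hab, rfl⟩ := hL
  refine ⟨(a • LinearMap.proj 0 + b • LinearMap.proj 1 : (Fin 2 → ℝ) →ₗ[ℝ] ℝ).toAffineMap +
    AffineMap.const ℝ _ c, fun h => hab ?_, fun x => by simp⟩
  have ha : a = 0 := by simpa using LinearMap.congr_fun h (Pi.single 0 1)
  have hb : b = 0 := by simpa using LinearMap.congr_fun h (Pi.single 1 1)
  rw [ha, hb]

theorem MvPolynomial.eq_zero_of_eval_eq_zero_on_lines {r : MvPolynomial (Fin 2) ℝ}
    (s : Finset (Set (ℝ × ℝ))) (hs : ∀ L ∈ s, IsLine L) (hdeg : r.totalDegree < s.card)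
    (hvan : ∀ L ∈ s, ∀ x ∈ L, eval ![x.1, x.2] r = 0) : r = 0 := by
  choose f hf hmem using fun L : s => (hs L L.2).exists_affineMap
  have hcoords (v : Fin 2 → ℝ) : ![v 0, v 1] = v := by ext i; fin_cases i <;> rfl
  refine eq_zero_of_eval_eq_zero_on_hyperplanes f hf (fun L M hLM => Subtype.ext ?_)
    (by simpa using hdeg) fun L v hv => ?_
  · ext x
    rw [hmem, hmem]
    exact Set.ext_iff.mp hLM ![x.1, x.2]
  · rw [← hcoords v]
    exact hvan L L.2 (v 0, v 1) ((hmem L _).mpr (by rwa [hcoords]))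

def lineThrough (x y : ℝ × ℝ) : Set (ℝ × ℝ) :=
  {z | (x.2 - y.2) * z.1 + (y.1 - x.1) * z.2 + (x.1 * y.2 - y.1 * x.2) = 0}

variable {x y : ℝ × ℝ}

theorem isLine_lineThrough (h : x ≠ y) : IsLine (lineThrough x y) := by
  refine ⟨_, _, _, fun hc => h ?_, rfl⟩
  simp only [Prod.mk.injEq, sub_eq_zero] at hc
  exact Prod.ext hc.2.symm hc.1

theorem segment_subset_lineThrough : segment ℝ x y ⊆ lineThrough x y := by
  rintro z ⟨u, v, -, -, huv, rfl⟩
  change (x.2 - y.2) * (u * x.1 + v * y.1) + (y.1 - x.1) * (u * x.2 + v * y.2)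
    + (x.1 * y.2 - y.1 * x.2) = 0
  linear_combination (y.1 * x.2 - x.1 * y.2) * huv

theorem exists_eq_add_smul_of_mem_lineThrough (h : x ≠ y) {z : ℝ × ℝ}
    (hz : z ∈ lineThrough x y) : ∃ t : ℝ, z = x + t • (y - x) := by
  change (x.2 - y.2) * z.1 + (y.1 - x.1) * z.2 + (x.1 * y.2 - y.1 * x.2) = 0 at hz
  have hd : (y.1 - x.1) ^ 2 + (y.2 - x.2) ^ 2 ≠ 0 := by
    intro h0
    refine h (Prod.ext ?_ ?_) <;> nlinarith [sq_nonneg (y.1 - x.1), sq_nonneg (y.2 - x.2)]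
  -- the parameter of the orthogonal projection of `z` onto the line
  refine ⟨((z.1 - x.1) * (y.1 - x.1) + (z.2 - x.2) * (y.2 - x.2)) /
    ((y.1 - x.1) ^ 2 + (y.2 - x.2) ^ 2), Prod.ext ?_ ?_⟩ <;>
  simp only [Prod.fst_add, Prod.snd_add, Prod.smul_fst, Prod.smul_snd, Prod.fst_sub,
      Prod.snd_sub, smul_eq_mul] <;>
  field_simp
  · linear_combination (x.2 - y.2) * hz
  · linear_combination (y.1 - x.1) * hz

theorem MvPolynomial.eval_eq_zero_on_lineThrough {r : MvPolynomial (Fin 2) ℝ} (h : x ≠ y)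
    (hr : ∀ z ∈ segment ℝ x y, eval ![z.1, z.2] r = 0) {z : ℝ × ℝ}
    (hz : z ∈ lineThrough x y) : eval ![z.1, z.2] r = 0 := by
  let e := (LinearEquiv.finTwoArrow ℝ ℝ).symm
  have he (u : ℝ × ℝ) : ![u.1, u.2] = e u := rfl
  obtain ⟨t, rfl⟩ := exists_eq_add_smul_of_mem_lineThrough h hz
  rw [he, map_add, map_smul]
  refine eval_add_smul_eq_zero_of_infinite (Set.Icc_infinite zero_lt_one) (fun t ht => ?_) t
  rw [← map_smul, ← map_add, ← he]
  exact hr _ (segment_eq_image' ℝ x y ▸ ⟨t, ht, rfl⟩)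

end Plane

theorem stmt3_general (n : ℕ) [NeZero n] (V : Fin n → ℝ × ℝ)
    (hedge : ∀ i : Fin n, V i ≠ V (i + 1))
    (B : Set (ℝ × ℝ)) (hB : B = ⋃ i : Fin n, segment ℝ (V i) (V (i + 1)))
    (S k : ℕ)
    (hmin : ∀ m : ℕ,
      (∃ L : Fin m → Set (ℝ × ℝ), (∀ i, IsLine (L i)) ∧ B ⊆ ⋃ i, L i) → S ≤ m)
    (hk : k < S)
    (p q : MvPolynomial (Fin 2) ℝ) (hp : p.totalDegree ≤ k) (hq : q.totalDegree ≤ k)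
    (heq : ∀ x ∈ B, MvPolynomial.eval ![x.1, x.2] p = MvPolynomial.eval ![x.1, x.2] q) :
    p = q := by
  classical
  let edgeLine (i : Fin n) := lineThrough (V i) (V (i + 1))
  let s := Finset.univ.image edgeLine
  have hs : ∀ L ∈ s, IsLine L := by
    simpa [s] using fun i => isLine_lineThrough (hedge i)
  have hcover : B ⊆ ⋃ j, (s.equivFin.symm j : Set (ℝ × ℝ)) := by
    rw [hB]
    refine Set.iUnion_subset fun i => segment_subset_lineThrough.trans ?_
    have hi : edgeLine i ∈ s := Finset.mem_image_of_mem _ (Finset.mem_univ i)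
    exact Set.subset_iUnion_of_subset (s.equivFin ⟨_, hi⟩) (by simp [edgeLine])
  have hS : S ≤ s.card := hmin _ ⟨_, fun j => hs _ (s.equivFin.symm j).2, hcover⟩
  have hvan : ∀ L ∈ s, ∀ x ∈ L, MvPolynomial.eval ![x.1, x.2] (p - q) = 0 := by
    simp only [s, Finset.mem_image, Finset.mem_univ, true_and, forall_exists_index,
      forall_apply_eq_imp_iff]
    refine fun i x hx => MvPolynomial.eval_eq_zero_on_lineThrough (hedge i) (fun z hz => ?_) hx
    rw [map_sub, heq z (hB ▸ Set.mem_iUnion_of_mem i hz), sub_self]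
  have hdeg : (p - q).totalDegree < s.card :=
    ((MvPolynomial.totalDegree_sub p q).trans (max_le hp hq)).trans_lt (hk.trans_le hS)
  exact sub_eq_zero.mp (MvPolynomial.eq_zero_of_eval_eq_zero_on_lines s hs hdeg hvan)

/-- Let `P` be a polygon (with vertices `V 0, …, V (n-1)` and boundary `B` the union of
its edges) whose boundary is covered by `S` lines, `S` minimal (`S = S(P)`), and let
`k < S`.  If two bivariate polynomials of degree at most `k` agree on `∂P`, they agree
everywhere; in particular the serendipity projector onto `P_k` is uniquely determined. -/
theorem stmt3 (n : ℕ) [NeZero n] (hn : 3 ≤ n) (V : Fin n → ℝ × ℝ)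
    (hedge : ∀ i : Fin n, V i ≠ V (i + 1))
    (B : Set (ℝ × ℝ)) (hB : B = ⋃ i : Fin n, segment ℝ (V i) (V (i + 1)))
    (S k : ℕ)
    (hcover : ∃ L : Fin S → Set (ℝ × ℝ), (∀ i, IsLine (L i)) ∧ B ⊆ ⋃ i, L i)
    (hmin : ∀ m : ℕ,
      (∃ L : Fin m → Set (ℝ × ℝ), (∀ i, IsLine (L i)) ∧ B ⊆ ⋃ i, L i) → S ≤ m)
    (hk : k < S)
    (p q : MvPolynomial (Fin 2) ℝ) (hp : p.totalDegree ≤ k) (hq : q.totalDegree ≤ k)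
    (heq : ∀ x ∈ B, MvPolynomial.eval ![x.1, x.2] p = MvPolynomial.eval ![x.1, x.2] q) :
    p = q :=
  stmt3_general n V hedge B hB S k hmin hk p q hp hq heq
end

section
/- Let a : H × H → ℝ be a symmetric positive semidefinite bilinear form on a real inner product space H, Π : H → H a linear projector with a(Πv, q) = a(v, q) for all q in the range of Π, and S a symmetric bilinear form satisfying c₁ a(w,w) ≤ S(w,w) ≤ c₂ a(w,w) for all w in the kernel of Π (with 0 < c₁ ≤ c₂). Then the form a_h(u,v) := a(Πu, Πv) + S(u−Πu, v−Πv) satisfies min(1,c₁)·a(v,v) ≤ a_h(v,v) ≤ max(1,c₂)·a(v,v) for all v ∈ H. -/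
/-! Since `a(Π v, q) = a(v, q)` on the range of `Π`, the splitting `v = Π v + (v - Π v)` is
`a`-orthogonal, so `a(v, v) = a(Π v, Π v) + a(v - Π v, v - Π v)`. The stabilisation only
replaces the second summand, which lies on `ker Π`, by the comparable quantity
`S(v - Π v, v - Π v)`. -/

namespace LinearMap.BilinForm

variable {R M : Type*} [CommRing R] [AddCommGroup M] [Module R M]

theorem apply_self_eq_apply_map_add_apply_sub_map (a : LinearMap.BilinForm R M)
    (hsym : ∀ u v, a u v = a v u) (P : M →ₗ[R] M)
    (horth : ∀ v, ∀ q ∈ LinearMap.range P, a (P v) q = a v q) (v : M) :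
    a v v = a (P v) (P v) + a (v - P v) (v - P v) := by
  have hcross : a (P v) (P v) = a v (P v) := horth v (P v) ⟨v, rfl⟩
  simp only [map_sub, LinearMap.sub_apply]
  rw [hsym (P v) v, ← hcross]
  ring

end LinearMap.BilinForm

theorem LinearMap.sub_apply_self_mem_ker_of_idem {R M : Type*} [Ring R] [AddCommGroup M]
    [Module R M] {P : M →ₗ[R] M} (hidem : ∀ v, P (P v) = P v) (v : M) :
    v - P v ∈ LinearMap.ker P := by
  rw [LinearMap.mem_ker, map_sub, hidem, sub_self]

section Arithmetic

variable {α : Type*} [Ring α] [LinearOrder α] [IsOrderedRing α] {p w s c : α}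

theorem min_one_mul_add_le_add (hp : 0 ≤ p) (hw : 0 ≤ w) (hs : c * w ≤ s) :
    min 1 c * (p + w) ≤ p + s := by
  have hP : min 1 c * p ≤ p := by
    simpa using mul_le_mul_of_nonneg_right (min_le_left 1 c) hp
  have hW : min 1 c * w ≤ c * w := mul_le_mul_of_nonneg_right (min_le_right 1 c) hw
  rw [mul_add]
  exact add_le_add hP (hW.trans hs)

theorem add_le_max_one_mul_add (hp : 0 ≤ p) (hw : 0 ≤ w) (hs : s ≤ c * w) :
    p + s ≤ max 1 c * (p + w) := by
  have hP : p ≤ max 1 c * p := by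
    simpa using mul_le_mul_of_nonneg_right (le_max_left 1 c) hp
  have hW : c * w ≤ max 1 c * w := mul_le_mul_of_nonneg_right (le_max_right 1 c) hw
  rw [mul_add]
  exact add_le_add hP (hs.trans hW)

end Arithmetic

theorem stmt10_general (H : Type*) [NormedAddCommGroup H] [InnerProductSpace ℝ H]
    (a S : H →ₗ[ℝ] H →ₗ[ℝ] ℝ)
    (hasym : ∀ u v, a u v = a v u) (hapsd : ∀ v, 0 ≤ a v v)
    (Pr : H →ₗ[ℝ] H) (hidem : ∀ v, Pr (Pr v) = Pr v)
    (horth : ∀ v, ∀ q ∈ LinearMap.range Pr, a (Pr v) q = a v q)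
    (c₁ c₂ : ℝ)
    (hS : ∀ w ∈ LinearMap.ker Pr, c₁ * a w w ≤ S w w ∧ S w w ≤ c₂ * a w w) :
    ∀ v : H,
      min 1 c₁ * a v v ≤ a (Pr v) (Pr v) + S (v - Pr v) (v - Pr v) ∧
      a (Pr v) (Pr v) + S (v - Pr v) (v - Pr v) ≤ max 1 c₂ * a v v := by
  intro v
  obtain ⟨hlower, hupper⟩ := hS _ (LinearMap.sub_apply_self_mem_ker_of_idem hidem v)
  rw [LinearMap.BilinForm.apply_self_eq_apply_map_add_apply_sub_map a hasym Pr horth v]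
  exact ⟨min_one_mul_add_le_add (hapsd _) (hapsd _) hlower,
    add_le_max_one_mul_add (hapsd _) (hapsd _) hupper⟩

/-- The VEM stability bound: if `a` is a symmetric positive semidefinite bilinear form,
`Pr` a linear projector with `a(Pr v, q) = a(v, q)` for all `q` in its range, and `S`
a symmetric bilinear form with `c₁ a(w,w) ≤ S(w,w) ≤ c₂ a(w,w)` on `ker Pr`, then
`a_h(v,v) := a(Pr v, Pr v) + S(v − Pr v, v − Pr v)` satisfies
`min(1,c₁) a(v,v) ≤ a_h(v,v) ≤ max(1,c₂) a(v,v)` for all `v`. -/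
theorem stmt10 (H : Type*) [NormedAddCommGroup H] [InnerProductSpace ℝ H]
    (a S : H →ₗ[ℝ] H →ₗ[ℝ] ℝ)
    (hasym : ∀ u v, a u v = a v u) (hapsd : ∀ v, 0 ≤ a v v)
    (Pr : H →ₗ[ℝ] H) (hidem : ∀ v, Pr (Pr v) = Pr v)
    (horth : ∀ v, ∀ q ∈ LinearMap.range Pr, a (Pr v) q = a v q)
    (hSsym : ∀ u v, S u v = S v u)
    (c₁ c₂ : ℝ) (hc₁ : 0 < c₁) (hc₁₂ : c₁ ≤ c₂)
    (hS : ∀ w ∈ LinearMap.ker Pr, c₁ * a w w ≤ S w w ∧ S w w ≤ c₂ * a w w) :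
    ∀ v : H,
      min 1 c₁ * a v v ≤ a (Pr v) (Pr v) + S (v - Pr v) (v - Pr v) ∧
      a (Pr v) (Pr v) + S (v - Pr v) (v - Pr v) ≤ max 1 c₂ * a v v :=
  stmt10_general H a S hasym hapsd Pr hidem horth c₁ c₂ hS
end
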